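/- Let θ be a proper convex piecewise linear function on ℝ^m, let Φ : ℝ^n × ℝ^d → ℝ^m be C²-smooth around (x̄,w̄) with z̄ := Φ(x̄,w̄) ∈ dom θ. Then for every v ∈ ∂θ(z̄) the condition ∂²θ(z̄,v)(0) ∩ ker ∇_xΦ(x̄,w̄)* = {0} holds if and only if S(z̄) ∩ ker ∇_xΦ(x̄,w̄)* = {0}; in particular, the second-order qualification condition ∂²θ(z̄,v)(0) ∩ ker ∇_xΦ(x̄,w̄)* = {0} for all v ∈ M(x̄,w̄,q̄) := {v ∈ ∂θ(z̄) : ∇_xΦ(x̄,w̄)*v = q̄} holds independently of the choice of q̄ with M(x̄,w̄,q̄) ≠ ∅ and is equivalent to S(z̄) ∩ ker ∇_xΦ(x̄,w̄)* = {0}. -/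

import Mathlib

noncomputable section
open Set Filter Topology Metric
open scoped RealInnerProductSpace Pointwise NNReal Classical

/-- `Euc m` is the Euclidean space `ℝ^m`. -/
abbrev Euc (m : ℕ) := EuclideanSpace ℝ (Fin m)

variable {F G : Type*} [NormedAddCommGroup F] [InnerProductSpace ℝ F]
  [NormedAddCommGroup G] [InnerProductSpace ℝ G]

/-- The (convex) subdifferential of an extended-real-valued function:
`∂θ(z) = {v : θ(z') ≥ θ(z) + ⟨v, z' - z⟩ for all z'}`. -/
def subdiff (θ : F → EReal) (z : F) : Set F :=
  {v | ∀ z', θ z + ((⟪v, z' - z⟫ : ℝ) : EReal) ≤ θ z'}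

/-- The Fréchet (regular) normal cone to `Ω` at `x`:
vectors `v` with `limsup_{y → x, y ∈ Ω} ⟨v, y - x⟩ / ‖y - x‖ ≤ 0`. -/
def frechetNormal (Ω : Set F) (x : F) : Set F :=
  {v | Filter.limsup (fun y => ⟪v, y - x⟫ / ‖y - x‖) (𝓝[Ω] x) ≤ 0}

/-- The limiting (Mordukhovich) normal cone to `Ω` at `x`. -/
def limitingNormal (Ω : Set F) (x : F) : Set F :=
  {v | ∃ xs vs : ℕ → F, (∀ k, xs k ∈ Ω) ∧ Filter.Tendsto xs Filter.atTop (𝓝 x) ∧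
    Filter.Tendsto vs Filter.atTop (𝓝 v) ∧ ∀ k, vs k ∈ frechetNormal Ω (xs k)}

/-- Pairing into the `ℓ²`-product of two inner product spaces. -/
def pl2 (x : F) (y : G) : WithLp 2 (F × G) := (WithLp.equiv 2 (F × G)).symm (x, y)

/-- The second-order subdifferential (generalized Hessian)
`∂²θ(z,v)(u) = {w : (w,-u) ∈ N((z,v); gph ∂θ)}`. -/
def sosd (θ : F → EReal) (z v : F) (u : F) : Set F :=
  {w | pl2 w (-u) ∈ limitingNormal
    {q : WithLp 2 (F × F) | ((WithLp.equiv 2 (F × F)) q).2 ∈ subdiff θ ((WithLp.equiv 2 (F × F)) q).1}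
    (pl2 z v)}

/-- The polyhedral domain `{z : ⟨d i, z⟩ ≤ β i for all i}` of a CPWL function. -/
def cpwlDom {m p : ℕ} (d : Fin p → Euc m) (β : Fin p → ℝ) : Set (Euc m) :=
  {z | ∀ i, ⟪d i, z⟫ ≤ β i}

/-- The CPWL function determined by the data `(a, α, d, β)`:
`θ(z) = max_i (⟨a i, z⟩ - α i)` on its polyhedral domain and `+∞` outside. -/
def cpwlFun {m l p : ℕ} (a : Fin l → Euc m) (α : Fin l → ℝ) (d : Fin p → Euc m)
    (β : Fin p → ℝ) : Euc m → EReal :=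
  fun z => if z ∈ cpwlDom d β then (((⨆ i, (⟪a i, z⟫ - α i)) : ℝ) : EReal) else ⊤

/-- Active indices of the max expression at `z`. -/
def Kact {m l p : ℕ} (a : Fin l → Euc m) (α : Fin l → ℝ) (d : Fin p → Euc m) (β : Fin p → ℝ)
    (z : Euc m) : Set (Fin l) :=
  {i | cpwlFun a α d β z = ((⟪a i, z⟫ - α i : ℝ) : EReal)}

/-- Active indices of the domain inequalities at `z`. -/
def Iact {m p : ℕ} (d : Fin p → Euc m) (β : Fin p → ℝ) (z : Euc m) : Set (Fin p) :=
  {i | ⟪d i, z⟫ = β i}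

/-- Convex conic hull: all finite nonnegative combinations of elements of `s`. -/
def coneHull (s : Set F) : Set F :=
  {x | ∃ (n : ℕ) (c : Fin n → ℝ) (y : Fin n → F), (∀ i, 0 ≤ c i) ∧ (∀ i, y i ∈ s) ∧
    x = ∑ i, c i • y i}

/-- `Spar θ z` is the linear subspace parallel to the affine hull of `∂θ(z)`. -/
def Spar (θ : F → EReal) (z : F) : Submodule ℝ F := (affineSpan ℝ (subdiff θ z)).direction

/-- A convex polyhedron: a finite intersection of closed halfspaces. -/
def IsPolyhedron {V : Type*} [AddCommGroup V] [Module ℝ V] (C : Set V) : Prop :=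
  ∃ (N : ℕ) (f : Fin N → V →ₗ[ℝ] ℝ) (b : Fin N → ℝ), C = {x | ∀ i, f i x ≤ b i}

/-- A proper convex piecewise linear function with values in `ℝ ∪ {+∞}`:
its epigraph is a convex polyhedron, it never takes the value `-∞`, and it is
not identically `+∞`. -/
def IsCPWL {V : Type*} [AddCommGroup V] [Module ℝ V] (f : V → EReal) : Prop :=
  IsPolyhedron {xt : V × ℝ | f xt.1 ≤ (xt.2 : EReal)} ∧ (∀ x, f x ≠ ⊥) ∧ (∃ x, f x ≠ ⊤)

/-- Local argmin set `M_γ(w,v)` of `x ↦ φ(x,w) - ⟨v,x⟩` over the ball `‖x - xb‖ ≤ γ`,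
with the convention that minimizers at which the objective is `+∞` are discarded. -/
def argminLoc {n d : ℕ} (φ : Euc n → Euc d → EReal) (xb : Euc n) (γ : ℝ) (w : Euc d)
    (v : Euc n) : Set (Euc n) :=
  {x | ‖x - xb‖ ≤ γ ∧ φ x w ≠ ⊤ ∧
    ∀ y, ‖y - xb‖ ≤ γ → φ x w - ((⟪v, x⟫ : ℝ) : EReal) ≤ φ y w - ((⟪v, y⟫ : ℝ) : EReal)}

/-- Local optimal value `m_γ(w,v)` of `x ↦ φ(x,w) - ⟨v,x⟩` over the ball `‖x - xb‖ ≤ γ`. -/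
def infLoc {n d : ℕ} (φ : Euc n → Euc d → EReal) (xb : Euc n) (γ : ℝ) (w : Euc d)
    (v : Euc n) : EReal :=
  ⨅ x ∈ {x : Euc n | ‖x - xb‖ ≤ γ}, (φ x w - ((⟪v, x⟫ : ℝ) : EReal))

/-- `xb` is a fully stable locally optimal solution of
`minimize φ(x,wb) - ⟨vb,x⟩` : for some `γ > 0` and neighborhoods `W × V` of `(wb,vb)`,
the local argmin map is single-valued and Lipschitz with value `xb` at `(wb,vb)`, and the
local optimal value function is finite and Lipschitz. -/
def FullyStableSol {n d : ℕ} (φ : Euc n → Euc d → EReal) (xb : Euc n) (wb : Euc d)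
    (vb : Euc n) : Prop :=
  ∃ γ > (0 : ℝ), ∃ W ∈ 𝓝 wb, ∃ V ∈ 𝓝 vb,
    (∃ σ : Euc d × Euc n → Euc n,
      (∃ K : ℝ≥0, LipschitzOnWith K σ (W ×ˢ V)) ∧
      (∀ w ∈ W, ∀ v ∈ V, argminLoc φ xb γ w v = {σ (w, v)}) ∧ σ (wb, vb) = xb) ∧
    (∃ μ : Euc d × Euc n → ℝ,
      (∃ K : ℝ≥0, LipschitzOnWith K μ (W ×ˢ V)) ∧
      ∀ w ∈ W, ∀ v ∈ V, infLoc φ xb γ w v = ((μ (w, v) : ℝ) : EReal))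

/-- The partial limiting subdifferential `∂ₓψ(x,w)` defined through the limiting normal
cone to the epigraph of `ψ(·,w)`. -/
def partialSubdiffX {n d : ℕ} (ψ : Euc n → Euc d → EReal) (x : Euc n) (w : Euc d) :
    Set (Euc n) :=
  {v | ∃ r : ℝ, ψ x w = (r : EReal) ∧
    pl2 v (-1 : ℝ) ∈ limitingNormal
      {q : WithLp 2 (Euc n × ℝ) |
        ψ ((WithLp.equiv 2 (Euc n × ℝ)) q).1 w ≤ ((((WithLp.equiv 2 (Euc n × ℝ)) q).2 : ℝ) : EReal)}
      (pl2 x r)}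

/-- The coderivative `D*∂ₓψ(xb,wb,qb)(u)` of the partial subdifferential mapping,
via the limiting normal cone to its graph in `ℝ^n × ℝ^d × ℝ^n`. -/
def coderivPartialSubdiffX {n d : ℕ} (ψ : Euc n → Euc d → EReal) (xb : Euc n) (wb : Euc d)
    (qb : Euc n) (u : Euc n) : Set (Euc n × Euc d) :=
  {P | pl2 (pl2 P.1 P.2) (-u) ∈ limitingNormal
    {t : WithLp 2 (WithLp 2 (Euc n × Euc d) × Euc n) |
      ((WithLp.equiv 2 (WithLp 2 (Euc n × Euc d) × Euc n)) t).2 ∈ partialSubdiffX ψ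
        ((WithLp.equiv 2 (Euc n × Euc d)) (((WithLp.equiv 2 (WithLp 2 (Euc n × Euc d) × Euc n)) t).1)).1
        ((WithLp.equiv 2 (Euc n × Euc d)) (((WithLp.equiv 2 (WithLp 2 (Euc n × Euc d) × Euc n)) t).1)).2}
    (pl2 (pl2 xb wb) qb)}

/-- Partial Hessian in `x` : the derivative in `x` of the partial gradient in `x`. -/
def hessXX {n d : ℕ} (g : Euc n → Euc d → ℝ) (xb : Euc n) (wb : Euc d) : Euc n →L[ℝ] Euc n :=
  fderiv ℝ (fun x => gradient (fun x' => g x' wb) x) xb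

/-- Mixed partial Hessian: derivative in `w` of the partial gradient in `x`. -/
def hessWX {n d : ℕ} (g : Euc n → Euc d → ℝ) (xb : Euc n) (wb : Euc d) : Euc d →L[ℝ] Euc n :=
  fderiv ℝ (fun w => gradient (fun x' => g x' w) xb) wb

/-!
For a CPWL function `θ` one has `∂²θ(z̄,v)(0) = S(z̄)` for every `v ∈ ∂θ(z̄)`, so the two
conditions are one and the same.

`S(z̄) ⊆ ∂²θ(z̄,v)(0)`: since `∂θ` is monotone, if `v' + ρ w ∈ ∂θ(z̄)` with `ρ > 0`, then
`(w, 0)` is a proximal, hence Fréchet, normal to `gph ∂θ` at `(z̄, v')`. For `w ∈ S(z̄)` this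
holds at every `v'` on the half-open segment from `v` to a relative interior point of `∂θ(z̄)`,
and letting `v' → v` yields a limiting normal.

`∂²θ(z̄,v)(0) ⊆ S(z̄)`: let `c ⊥ S(z̄)`. Near `z̄` the active indices of `θ` are among those at
`z̄`, so along `c` the active affine pieces all have the same slope and the active constraints
stay active; `θ` is thus affine on a short segment through `z` in direction `c`, and each
`v ∈ ∂θ(z)` remains a subgradient along it. So `gph ∂θ` contains short segments in direction
`(c, 0)` through all its points near `(z̄, v)`, which forces every limiting normal to be
orthogonal to `(c, 0)`.
-/

section Pl2

lemma inner_pl2 (w x : F) (u y : G) : ⟪pl2 w u, pl2 x y⟫ = ⟪w, x⟫ + ⟪u, y⟫ := rfl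

lemma pl2_add_smul_pl2_zero (z c : F) (v : G) (t : ℝ) :
    pl2 z v + t • pl2 c 0 = pl2 (z + t • c) v := by
  simp [pl2, ← WithLp.toLp_smul, ← WithLp.toLp_add]

lemma continuous_pl2 : Continuous fun q : F × G => pl2 q.1 q.2 :=
  (WithLp.prodContinuousLinearEquiv 2 ℝ F G).symm.continuous

end Pl2

section NormalCones

variable {Ω : Set F} {x v e : F}

lemma abs_inner_div_norm_le (v h : F) : |⟪v, h⟫ / ‖h‖| ≤ ‖v‖ := by
  rw [abs_div, abs_norm]
  exact div_le_of_le_mul₀ (norm_nonneg _) (norm_nonneg _) (abs_real_inner_le_norm v h)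

lemma mem_frechetNormal_of_inner_le_mul_sq (hx : x ∈ Ω) {C : ℝ}
    (h : ∀ y ∈ Ω, ⟪v, y - x⟫ ≤ C * ‖y - x‖ ^ 2) : v ∈ frechetNormal Ω x := by
  have : (𝓝[Ω] x).NeBot := mem_closure_iff_nhdsWithin_neBot.1 (subset_closure hx)
  have hquot : ∀ y ∈ Ω, ⟪v, y - x⟫ / ‖y - x‖ ≤ C * ‖y - x‖ := by
    intro y hy
    rcases (norm_nonneg (y - x)).eq_or_lt with h0 | hpos
    · simp [← h0]
    · rw [div_le_iff₀ hpos]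
      nlinarith [h y hy]
  have hlim : Tendsto (fun y => C * ‖y - x‖) (𝓝[Ω] x) (𝓝 0) :=
    ((by fun_prop : Continuous fun y => C * ‖y - x‖).tendsto' x 0 (by simp)).mono_left
      nhdsWithin_le_nhds
  have hcobdd : IsCoboundedUnder (· ≤ ·) (𝓝[Ω] x) fun y => ⟪v, y - x⟫ / ‖y - x‖ :=
    (isBoundedUnder_of ⟨-‖v‖, fun y => (abs_le.1 (abs_inner_div_norm_le v _)).1⟩)
      |>.isCoboundedUnder_le
  calc limsup (fun y => ⟪v, y - x⟫ / ‖y - x‖) (𝓝[Ω] x)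
      ≤ limsup (fun y => C * ‖y - x‖) (𝓝[Ω] x) :=
        limsup_le_limsup (eventually_nhdsWithin_of_forall hquot) hcobdd hlim.isBoundedUnder_le
    _ = 0 := hlim.limsup_eq

lemma inner_nonpos_of_mem_frechetNormal (hv : v ∈ frechetNormal Ω x)
    (hray : ∀ᶠ t in 𝓝[>] (0 : ℝ), x + t • e ∈ Ω) : ⟪v, e⟫ ≤ 0 := by
  by_contra! hpos
  have he : 0 < ‖e‖ := norm_pos_iff.2 fun h => by simp [h] at hpos
  have hbdd : IsBoundedUnder (· ≤ ·) (𝓝[Ω] x) fun y => ⟪v, y - x⟫ / ‖y - x‖ :=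
    isBoundedUnder_of ⟨‖v‖, fun y => (abs_le.1 (abs_inner_div_norm_le v _)).2⟩
  have hlt := eventually_lt_of_limsup_lt (hv.trans_lt (div_pos hpos he)) hbdd
  have hcurve : Tendsto (fun t : ℝ => x + t • e) (𝓝[>] 0) (𝓝[Ω] x) :=
    tendsto_nhdsWithin_iff.2 ⟨((by fun_prop : Continuous fun t : ℝ => x + t • e).tendsto' 0 x
      (by simp)).mono_left nhdsWithin_le_nhds, hray⟩
  obtain ⟨t, ht, ht0⟩ := ((hcurve.eventually hlt).and self_mem_nhdsWithin).exists
  rw [add_sub_cancel_left, real_inner_smul_right, norm_smul, Real.norm_of_nonneg (le_of_lt ht0),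
    mul_div_mul_left _ _ (ne_of_gt ht0)] at ht
  exact lt_irrefl _ ht

lemma inner_eq_zero_of_mem_frechetNormal (hv : v ∈ frechetNormal Ω x)
    (hline : ∀ᶠ t in 𝓝 (0 : ℝ), x + t • e ∈ Ω) : ⟪v, e⟫ = 0 := by
  have hline' : ∀ᶠ t in 𝓝 (0 : ℝ), x + t • -e ∈ Ω := by
    simpa only [neg_smul, smul_neg] using
      (continuous_neg.tendsto' (0 : ℝ) 0 neg_zero).eventually hline
  have h₁ := inner_nonpos_of_mem_frechetNormal hv (hline.filter_mono nhdsWithin_le_nhds)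
  have h₂ := inner_nonpos_of_mem_frechetNormal hv (hline'.filter_mono nhdsWithin_le_nhds)
  rw [inner_neg_right] at h₂
  linarith

lemma inner_eq_zero_of_mem_limitingNormal
    (hloc : ∀ᶠ y in 𝓝[Ω] x, ∀ᶠ t in 𝓝 (0 : ℝ), y + t • e ∈ Ω) (hv : v ∈ limitingNormal Ω x) :
    ⟪v, e⟫ = 0 := by
  obtain ⟨xs, vs, hxsΩ, hxs, hvs, hfre⟩ := hv
  have hzero : ∀ᶠ k in atTop, ⟪vs k, e⟫ = 0 :=
    ((tendsto_nhdsWithin_iff.2 ⟨hxs, Eventually.of_forall hxsΩ⟩).eventually hloc).mono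
      fun k hk => inner_eq_zero_of_mem_frechetNormal (hfre k) hk
  exact tendsto_nhds_unique (hvs.inner tendsto_const_nhds)
    (tendsto_const_nhds.congr' (hzero.mono fun k hk => hk.symm))

end NormalCones

section MonotoneOperator

-- `gph T` in the `ℓ²` product, so that `sosd θ` is read off `limitingNormal (l2Graph (subdiff θ))`.
def l2Graph (T : F → Set F) : Set (WithLp 2 (F × F)) :=
  {q | (WithLp.equiv 2 (F × F) q).2 ∈ T (WithLp.equiv 2 (F × F) q).1}

def IsMonotoneOperator (T : F → Set F) : Prop :=
  ∀ ⦃z z' v v' : F⦄, v ∈ T z → v' ∈ T z' → 0 ≤ ⟪v' - v, z' - z⟫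

variable {T : F → Set F} {z v w : F}

lemma pl2_mem_frechetNormal_l2Graph (hT : IsMonotoneOperator T) (hv : v ∈ T z) {ρ : ℝ}
    (hρ : 0 < ρ) (hw : v + ρ • w ∈ T z) :
    pl2 w 0 ∈ frechetNormal (l2Graph T) (pl2 z v) := by
  refine mem_frechetNormal_of_inner_le_mul_sq (C := ρ⁻¹) hv fun y hy => ?_
  set z' := (WithLp.equiv 2 (F × F) y).1
  set u := (WithLp.equiv 2 (F × F) y).2
  have hdiff : y - pl2 z v = pl2 (z' - z) (u - v) := rfl
  have hfst : ‖z' - z‖ ≤ ‖y - pl2 z v‖ := WithLp.norm_fst_le F (y - pl2 z v)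
  have hsnd : ‖u - v‖ ≤ ‖y - pl2 z v‖ := WithLp.norm_snd_le F (y - pl2 z v)
  have hmono : 0 ≤ ⟪u - (v + ρ • w), z' - z⟫ := hT hw hy
  have key : ρ * ⟪w, z' - z⟫ ≤ ‖y - pl2 z v‖ ^ 2 :=
    calc ρ * ⟪w, z' - z⟫ ≤ ⟪u - v, z' - z⟫ := by
          rw [sub_add_eq_sub_sub, inner_sub_left, real_inner_smul_left] at hmono
          linarith
      _ ≤ ‖u - v‖ * ‖z' - z‖ := real_inner_le_norm _ _
      _ ≤ ‖y - pl2 z v‖ * ‖y - pl2 z v‖ :=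
          mul_le_mul hsnd hfst (norm_nonneg _) (norm_nonneg _)
      _ = ‖y - pl2 z v‖ ^ 2 := (sq _).symm
  rw [hdiff, inner_pl2, inner_zero_left, add_zero, ← hdiff, inv_mul_eq_div, le_div_iff₀ hρ]
  linarith

lemma exists_pos_add_smul_mem_of_mem_intrinsicInterior {C : Set F}
    (hv : v ∈ intrinsicInterior ℝ C) (hw : w ∈ (affineSpan ℝ C).direction) :
    ∃ r > (0 : ℝ), v + r • w ∈ C := by
  obtain ⟨y, hy, rfl⟩ := mem_intrinsicInterior.1 hv
  let γ : ℝ → affineSpan ℝ C := fun r =>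
    ⟨r • w +ᵥ (y : F), AffineSubspace.vadd_mem_of_mem_direction (Submodule.smul_mem _ r hw) y.2⟩
  have hγ : Continuous γ := by fun_prop
  have hγ0 : γ 0 = y := by ext; simp [γ]
  have hnear := (hγ.tendsto' 0 y hγ0).eventually (isOpen_interior.mem_nhds hy)
  obtain ⟨r, hr, hr0⟩ := ((hnear.filter_mono nhdsWithin_le_nhds).and
    (self_mem_nhdsWithin (s := Ioi (0 : ℝ)))).exists
  exact ⟨r, hr0, by simpa [γ, add_comm] using interior_subset hr⟩

lemma pl2_mem_limitingNormal_l2Graph [FiniteDimensional ℝ F] (hT : IsMonotoneOperator T)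
    (hconv : Convex ℝ (T z)) (hv : v ∈ T z) (hw : w ∈ (affineSpan ℝ (T z)).direction) :
    pl2 w 0 ∈ limitingNormal (l2Graph T) (pl2 z v) := by
  obtain ⟨v₀, hv₀⟩ := Set.Nonempty.intrinsicInterior hconv ⟨v, hv⟩
  obtain ⟨r, hr, hv₀w⟩ := exists_pos_add_smul_mem_of_mem_intrinsicInterior hv₀ hw
  set t : ℕ → ℝ := fun k => 1 / ((k : ℝ) + 1)
  have ht0 : ∀ k, 0 < t k := fun k => by positivity
  have ht : ∀ k, t k ∈ Icc (0 : ℝ) 1 := fun k =>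
    ⟨(ht0 k).le, div_le_one_of_le₀ (by linarith [k.cast_nonneg (α := ℝ)]) (by positivity)⟩
  have hvs : ∀ k, v + t k • (v₀ - v) ∈ T z := fun k =>
    hconv.add_smul_sub_mem hv (intrinsicInterior_subset hv₀) (ht k)
  refine ⟨fun k => pl2 z (v + t k • (v₀ - v)), fun _ => pl2 w 0, hvs, ?_, tendsto_const_nhds,
    fun k => pl2_mem_frechetNormal_l2Graph hT (hvs k) (mul_pos (ht0 k) hr) ?_⟩
  · have hlim : Tendsto (fun k => v + t k • (v₀ - v)) atTop (𝓝 v) := by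
      simpa [t] using
        ((tendsto_one_div_add_atTop_nhds_zero_nat (𝕜 := ℝ)).smul_const (v₀ - v)).const_add v
    exact (continuous_pl2.tendsto (z, v)).comp (tendsto_const_nhds.prodMk_nhds hlim)
  · convert hconv.add_smul_sub_mem hv hv₀w (ht k) using 1
    rw [mul_smul, add_assoc, ← smul_add, sub_add_eq_add_sub]

end MonotoneOperator

section Subdifferential

variable {θ : F → EReal} {z z' v c : F}

lemma convex_subdiff (θ : F → EReal) (z : F) : Convex ℝ (subdiff θ z) := by
  simp only [subdiff, ofPred_forall]
  refine convex_iInter fun z' => ?_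
  have hdown : OrdConnected {r : ℝ | θ z + r ≤ θ z'} :=
    ⟨fun _ _ _ hs _ hu => le_trans (add_le_add le_rfl (EReal.coe_le_coe_iff.2 hu.2)) hs⟩
  have hpre : {u | θ z + ↑⟪u, z' - z⟫ ≤ θ z'} =
      innerₛₗ ℝ (z' - z) ⁻¹' {r : ℝ | θ z + r ≤ θ z'} := by
    ext u
    change θ z + ↑⟪u, z' - z⟫ ≤ θ z' ↔ θ z + ↑⟪z' - z, u⟫ ≤ θ z'
    rw [real_inner_comm]
  rw [hpre]
  exact hdown.convex.linear_preimage _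

lemma ne_top_of_mem_subdiff (hv : v ∈ subdiff θ z) (hz' : θ z' ≠ ⊤) : θ z ≠ ⊤ := fun h =>
  hz' (top_le_iff.1 (by simpa [h] using hv z'))

lemma add_inner_le_of_mem_subdiff {r r' : ℝ} (hv : v ∈ subdiff θ z) (hz : θ z = r)
    (hz' : θ z' = r') : r + ⟪v, z' - z⟫ ≤ r' := by
  have := hv z'
  rwa [hz, hz', ← EReal.coe_add, EReal.coe_le_coe_iff] at this

lemma isMonotoneOperator_subdiff (hbot : ∀ z, θ z ≠ ⊥) {z₀ : F} (htop : θ z₀ ≠ ⊤) :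
    IsMonotoneOperator (subdiff θ) := by
  intro z z' v v' hv hv'
  have h₁ := add_inner_le_of_mem_subdiff hv
    (EReal.coe_toReal (ne_top_of_mem_subdiff hv htop) (hbot z)).symm
    (EReal.coe_toReal (ne_top_of_mem_subdiff hv' htop) (hbot z')).symm
  have h₂ := add_inner_le_of_mem_subdiff hv'
    (EReal.coe_toReal (ne_top_of_mem_subdiff hv' htop) (hbot z')).symm
    (EReal.coe_toReal (ne_top_of_mem_subdiff hv htop) (hbot z)).symm
  rw [inner_sub_right] at h₁ h₂
  rw [inner_sub_left, inner_sub_right, inner_sub_right]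
  linarith

lemma eventually_mem_subdiff_add_smul {r s : ℝ} (hv : v ∈ subdiff θ z)
    (haff : ∀ᶠ t in 𝓝 (0 : ℝ), θ (z + t • c) = ↑(r + t * s)) :
    ∀ᶠ t in 𝓝 (0 : ℝ), v ∈ subdiff θ (z + t • c) := by
  have hz : θ z = r := by simpa using haff.self_of_nhds
  have hslope : ⟪v, c⟫ = s := by
    have haff' := (continuous_neg.tendsto' (0 : ℝ) 0 neg_zero).eventually haff
    obtain ⟨t, ⟨ht, ht'⟩, ht0⟩ := (((haff.and haff').filter_mono nhdsWithin_le_nhds).and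
      (self_mem_nhdsWithin (s := Ioi (0 : ℝ)))).exists
    have h₁ := add_inner_le_of_mem_subdiff hv hz ht
    have h₂ := add_inner_le_of_mem_subdiff hv hz ht'
    simp only [add_sub_cancel_left, real_inner_smul_right] at h₁ h₂
    have ht0 : (0 : ℝ) < t := ht0
    exact le_antisymm (le_of_mul_le_mul_left (by linarith) ht0)
      (le_of_mul_le_mul_left (by linarith) ht0)
  filter_upwards [haff] with t ht z'
  calc θ (z + t • c) + ↑⟪v, z' - (z + t • c)⟫ = θ z + ↑⟪v, z' - z⟫ := by
        rw [ht, hz, ← EReal.coe_add, ← EReal.coe_add, sub_add_eq_sub_sub,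
          inner_sub_right _ (z' - z), real_inner_smul_right, hslope]
        ring_nf
    _ ≤ θ z' := hv z'

lemma Spar_subset_sosd_zero [FiniteDimensional ℝ F] (hbot : ∀ z, θ z ≠ ⊥) (hz : θ z ≠ ⊤)
    (hv : v ∈ subdiff θ z) : (Spar θ z : Set F) ⊆ sosd θ z v 0 := fun w hw => by
  show pl2 w (-(0 : F)) ∈ limitingNormal (l2Graph (subdiff θ)) (pl2 z v)
  rw [neg_zero]
  exact pl2_mem_limitingNormal_l2Graph (isMonotoneOperator_subdiff hbot hz) (convex_subdiff θ z)
    hv hw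

end Subdifferential

section CPWL

variable {m l p : ℕ} {a : Fin l → Euc m} {α : Fin l → ℝ} {d : Fin p → Euc m} {β : Fin p → ℝ}
  {z zb v vb c : Euc m}

def cpwlMax (a : Fin l → Euc m) (α : Fin l → ℝ) (z : Euc m) : ℝ := ⨆ i, (⟪a i, z⟫ - α i)

lemma cpwlFun_of_mem (hz : z ∈ cpwlDom d β) : cpwlFun a α d β z = cpwlMax a α z := if_pos hz

lemma cpwlFun_of_not_mem (hz : z ∉ cpwlDom d β) : cpwlFun a α d β z = ⊤ := if_neg hz

lemma cpwlFun_ne_bot (z : Euc m) : cpwlFun a α d β z ≠ ⊥ := by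
  unfold cpwlFun
  split_ifs <;> simp

lemma cpwlFun_ne_top (hz : z ∈ cpwlDom d β) : cpwlFun a α d β z ≠ ⊤ := by
  rw [cpwlFun_of_mem hz]
  exact EReal.coe_ne_top _

lemma mem_cpwlDom_of_mem_subdiff (hv : v ∈ subdiff (cpwlFun a α d β) z)
    (hzb : zb ∈ cpwlDom d β) : z ∈ cpwlDom d β := by
  by_contra h
  exact ne_top_of_mem_subdiff hv (cpwlFun_ne_top hzb) (cpwlFun_of_not_mem h)

lemma le_cpwlMax (z : Euc m) (i : Fin l) : ⟪a i, z⟫ - α i ≤ cpwlMax a α z :=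
  le_ciSup (f := fun i => ⟪a i, z⟫ - α i) (finite_range _).bddAbove i

lemma mem_Kact_iff {i : Fin l} :
    i ∈ Kact a α d β z ↔ z ∈ cpwlDom d β ∧ cpwlMax a α z = ⟪a i, z⟫ - α i := by
  change cpwlFun a α d β z = ((⟪a i, z⟫ - α i : ℝ) : EReal) ↔ _
  by_cases hz : z ∈ cpwlDom d β
  · rw [cpwlFun_of_mem hz, EReal.coe_eq_coe_iff]
    exact (and_iff_right hz).symm
  · rw [cpwlFun_of_not_mem hz]
    exact iff_of_false (EReal.coe_ne_top _).symm fun h => hz h.1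

lemma exists_mem_Kact (hl : 0 < l) (hz : z ∈ cpwlDom d β) : ∃ i, i ∈ Kact a α d β z := by
  have : Nonempty (Fin l) := ⟨⟨0, hl⟩⟩
  obtain ⟨i, hi⟩ := exists_eq_ciSup_of_finite (f := fun i => ⟪a i, z⟫ - α i)
  exact ⟨i, mem_Kact_iff.2 ⟨hz, hi.symm⟩⟩

lemma a_mem_subdiff {i : Fin l} (hi : i ∈ Kact a α d β z) :
    a i ∈ subdiff (cpwlFun a α d β) z := by
  obtain ⟨hz, hmax⟩ := mem_Kact_iff.1 hi
  intro z'
  by_cases hz' : z' ∈ cpwlDom d β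
  · rw [cpwlFun_of_mem hz, cpwlFun_of_mem hz', ← EReal.coe_add, EReal.coe_le_coe_iff, hmax,
      inner_sub_right]
    linarith [le_cpwlMax (a := a) (α := α) z' i]
  · rw [cpwlFun_of_not_mem hz']
    exact le_top

lemma add_d_mem_subdiff {i : Fin p} (hi : i ∈ Iact d β z)
    (hv : v ∈ subdiff (cpwlFun a α d β) z) : v + d i ∈ subdiff (cpwlFun a α d β) z := by
  intro z'
  by_cases hz' : z' ∈ cpwlDom d β
  · have hdi : ⟪d i, z' - z⟫ ≤ 0 := by
      have hiz : ⟪d i, z⟫ = β i := hi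
      have hiz' : ⟪d i, z'⟫ ≤ β i := hz' i
      rw [inner_sub_right]
      linarith
    calc cpwlFun a α d β z + ↑⟪v + d i, z' - z⟫ ≤ cpwlFun a α d β z + ↑⟪v, z' - z⟫ := by
          rw [inner_add_left]
          exact add_le_add le_rfl (EReal.coe_le_coe_iff.2 (by linarith))
      _ ≤ cpwlFun a α d β z' := hv z'
  · rw [cpwlFun_of_not_mem hz']
    exact le_top

lemma d_mem_Spar (hv : v ∈ subdiff (cpwlFun a α d β) z) {i : Fin p} (hi : i ∈ Iact d β z) :
    d i ∈ Spar (cpwlFun a α d β) z := by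
  simpa [Spar] using AffineSubspace.vsub_mem_direction
    (subset_affineSpan ℝ _ (add_d_mem_subdiff hi hv)) (subset_affineSpan ℝ _ hv)

lemma a_sub_a_mem_Spar {i j : Fin l} (hi : i ∈ Kact a α d β z) (hj : j ∈ Kact a α d β z) :
    a i - a j ∈ Spar (cpwlFun a α d β) z :=
  AffineSubspace.vsub_mem_direction (subset_affineSpan ℝ _ (a_mem_subdiff hi))
    (subset_affineSpan ℝ _ (a_mem_subdiff hj))

lemma eventually_Kact_subset (hzb : zb ∈ cpwlDom d β) :
    ∀ᶠ z in 𝓝 zb, Kact a α d β z ⊆ Kact a α d β zb := by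
  have hind : ∀ i, ∀ᶠ z in 𝓝 zb, i ∈ Kact a α d β z → i ∈ Kact a α d β zb := by
    intro i
    by_cases hi : i ∈ Kact a α d β zb
    · exact Eventually.of_forall fun _ _ => hi
    · have hlt : ⟪a i, zb⟫ - α i < cpwlMax a α zb :=
        (le_cpwlMax zb i).lt_of_ne fun h => hi (mem_Kact_iff.2 ⟨hzb, h.symm⟩)
      have : Nonempty (Fin l) := ⟨i⟩
      obtain ⟨j, hj⟩ := exists_lt_of_lt_ciSup hlt
      filter_upwards [ContinuousAt.eventually_lt (f := fun z => ⟪a i, z⟫ - α i)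
        (g := fun z => ⟪a j, z⟫ - α j) (by fun_prop) (by fun_prop) hj] with z hz hiz
      linarith [(mem_Kact_iff.1 hiz).2, le_cpwlMax (a := a) (α := α) z j]
  filter_upwards [eventually_all.2 hind] with z hz i hi using hz i hi

lemma eventually_Iact_subset (hzb : zb ∈ cpwlDom d β) :
    ∀ᶠ z in 𝓝 zb, Iact d β z ⊆ Iact d β zb := by
  have hind : ∀ i, ∀ᶠ z in 𝓝 zb, i ∈ Iact d β z → i ∈ Iact d β zb := by
    intro i
    by_cases hi : i ∈ Iact d β zb
    · exact Eventually.of_forall fun _ _ => hi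
    · filter_upwards [ContinuousAt.eventually_lt (by fun_prop) continuousAt_const
        ((hzb i).lt_of_ne hi)] with z hz hiz
      exact absurd hiz (ne_of_lt hz)
  filter_upwards [eventually_all.2 hind] with z hz i hi using hz i hi

lemma eventually_add_smul_mem_cpwlDom (hz : z ∈ cpwlDom d β)
    (hc : ∀ i ∈ Iact d β z, ⟪d i, c⟫ = 0) : ∀ᶠ t in 𝓝 (0 : ℝ), z + t • c ∈ cpwlDom d β := by
  refine eventually_all.2 fun i => ?_
  by_cases hi : i ∈ Iact d β z
  · refine Eventually.of_forall fun t => ?_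
    rw [inner_add_right, real_inner_smul_right, hc i hi, mul_zero, add_zero]
    exact hz i
  · have h0 : ⟪d i, z + (0 : ℝ) • c⟫ < β i := by simpa using (hz i).lt_of_ne hi
    exact (ContinuousAt.eventually_lt (f := fun t : ℝ => ⟪d i, z + t • c⟫) (by fun_prop)
      continuousAt_const h0).mono fun _ ht => ht.le

lemma eventually_cpwlMax_add_smul {i₀ : Fin l} (hi₀ : i₀ ∈ Kact a α d β z)
    (hc : ∀ i ∈ Kact a α d β z, ⟪a i, c⟫ = ⟪a i₀, c⟫) :
    ∀ᶠ t in 𝓝 (0 : ℝ), cpwlMax a α (z + t • c) = cpwlMax a α z + t * ⟪a i₀, c⟫ := by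
  obtain ⟨hz, hmax₀⟩ := mem_Kact_iff.1 hi₀
  have hterm : ∀ i (t : ℝ), ⟪a i, z + t • c⟫ - α i = ⟪a i, z⟫ - α i + t * ⟪a i, c⟫ := by
    intro i t
    rw [inner_add_right, real_inner_smul_right]
    ring
  have hle : ∀ i, ∀ᶠ t in 𝓝 (0 : ℝ),
      ⟪a i, z + t • c⟫ - α i ≤ cpwlMax a α z + t * ⟪a i₀, c⟫ := by
    intro i
    by_cases hi : i ∈ Kact a α d β z
    · exact Eventually.of_forall fun t => by rw [hterm, hc i hi, (mem_Kact_iff.1 hi).2]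
    · have h0 : ⟪a i, z + (0 : ℝ) • c⟫ - α i < cpwlMax a α z + 0 * ⟪a i₀, c⟫ := by
        simpa using (le_cpwlMax z i).lt_of_ne fun h => hi (mem_Kact_iff.2 ⟨hz, h.symm⟩)
      exact (ContinuousAt.eventually_lt (f := fun t : ℝ => ⟪a i, z + t • c⟫ - α i)
        (g := fun t : ℝ => cpwlMax a α z + t * ⟪a i₀, c⟫) (by fun_prop) (by fun_prop) h0).mono
        fun _ ht => ht.le
  have : Nonempty (Fin l) := ⟨i₀⟩
  filter_upwards [eventually_all.2 hle] with t ht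
  refine le_antisymm (ciSup_le ht) ?_
  calc cpwlMax a α z + t * ⟪a i₀, c⟫ = ⟪a i₀, z + t • c⟫ - α i₀ := by rw [hterm, hmax₀]
    _ ≤ cpwlMax a α (z + t • c) := le_cpwlMax _ i₀

lemma eventually_forall_mem_subdiff_add_smul (hl : 0 < l) (hzb : zb ∈ cpwlDom d β)
    (hvb : vb ∈ subdiff (cpwlFun a α d β) zb) (hc : c ∈ (Spar (cpwlFun a α d β) zb)ᗮ) :
    ∀ᶠ z in 𝓝 zb, ∀ v ∈ subdiff (cpwlFun a α d β) z,
      ∀ᶠ t in 𝓝 (0 : ℝ), v ∈ subdiff (cpwlFun a α d β) (z + t • c) := by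
  filter_upwards [eventually_Kact_subset hzb, eventually_Iact_subset hzb] with z hK hI v hv
  have hz := mem_cpwlDom_of_mem_subdiff hv hzb
  obtain ⟨i₀, hi₀⟩ := exists_mem_Kact hl hz
  have horth := (Submodule.mem_orthogonal _ c).1 hc
  have hslope : ∀ i ∈ Kact a α d β z, ⟪a i, c⟫ = ⟪a i₀, c⟫ := fun i hi => by
    have := horth _ (a_sub_a_mem_Spar (hK hi) (hK hi₀))
    rwa [inner_sub_left, sub_eq_zero] at this
  refine eventually_mem_subdiff_add_smul hv (r := cpwlMax a α z) (s := ⟪a i₀, c⟫) ?_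
  filter_upwards [eventually_add_smul_mem_cpwlDom hz fun i hi => horth _ (d_mem_Spar hvb (hI hi)),
    eventually_cpwlMax_add_smul hi₀ hslope] with t hdom hmax
  rw [cpwlFun_of_mem hdom, hmax]

lemma sosd_zero_subset_Spar (hl : 0 < l) (hzb : zb ∈ cpwlDom d β)
    (hvb : vb ∈ subdiff (cpwlFun a α d β) zb) :
    sosd (cpwlFun a α d β) zb vb 0 ⊆ Spar (cpwlFun a α d β) zb := by
  intro w hw
  rw [SetLike.mem_coe, ← Submodule.orthogonal_orthogonal (Spar (cpwlFun a α d β) zb),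
    Submodule.mem_orthogonal]
  intro c hc
  have hsegments : ∀ᶠ q in 𝓝[l2Graph (subdiff (cpwlFun a α d β))] (pl2 zb vb),
      ∀ᶠ t in 𝓝 (0 : ℝ), q + t • pl2 c 0 ∈ l2Graph (subdiff (cpwlFun a α d β)) := by
    have hfst : Tendsto (fun q => (WithLp.equiv 2 (Euc m × Euc m) q).1)
        (𝓝[l2Graph (subdiff (cpwlFun a α d β))] (pl2 zb vb)) (𝓝 zb) :=
      ((by fun_prop : Continuous fun q : WithLp 2 (Euc m × Euc m) =>
        (WithLp.equiv 2 (Euc m × Euc m) q).1).tendsto _).mono_left nhdsWithin_le_nhds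
    filter_upwards [hfst.eventually (eventually_forall_mem_subdiff_add_smul hl hzb hvb hc),
      self_mem_nhdsWithin] with q hq hqΩ
    filter_upwards [hq _ hqΩ] with t ht
    rwa [show q = pl2 _ _ from rfl, pl2_add_smul_pl2_zero]
  have := inner_eq_zero_of_mem_limitingNormal hsegments hw
  rw [inner_pl2, inner_zero_right, add_zero] at this
  rwa [real_inner_comm]

lemma sosd_zero_eq_Spar (hl : 0 < l) (hzb : zb ∈ cpwlDom d β)
    (hvb : vb ∈ subdiff (cpwlFun a α d β) zb) :
    sosd (cpwlFun a α d β) zb vb 0 = Spar (cpwlFun a α d β) zb :=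
  (sosd_zero_subset_Spar hl hzb hvb).antisymm
    (Spar_subset_sosd_zero cpwlFun_ne_bot (cpwlFun_ne_top hzb) hvb)

end CPWL

theorem soqc_iff_parallel_subspace_cond_general {n dd m l p : ℕ} (hl : 0 < l)
    (a : Fin l → Euc m) (α : Fin l → ℝ) (d : Fin p → Euc m) (β : Fin p → ℝ)
    (Φ : Euc n × Euc dd → Euc m) (xb : Euc n) (wb : Euc dd)
    (hzb : Φ (xb, wb) ∈ cpwlDom d β) :
    (∀ v ∈ subdiff (cpwlFun a α d β) (Φ (xb, wb)),
        (sosd (cpwlFun a α d β) (Φ (xb, wb)) v 0 ∩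
            {y | ContinuousLinearMap.adjoint (fderiv ℝ (fun x => Φ (x, wb)) xb) y = 0} = {0} ↔
          (Spar (cpwlFun a α d β) (Φ (xb, wb)) : Set (Euc m)) ∩
            {y | ContinuousLinearMap.adjoint (fderiv ℝ (fun x => Φ (x, wb)) xb) y = 0} = {0})) ∧
    (∀ qb : Euc n,
      {v ∈ subdiff (cpwlFun a α d β) (Φ (xb, wb)) |
          ContinuousLinearMap.adjoint (fderiv ℝ (fun x => Φ (x, wb)) xb) v = qb}.Nonempty →
      ((∀ v ∈ {v ∈ subdiff (cpwlFun a α d β) (Φ (xb, wb)) |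
          ContinuousLinearMap.adjoint (fderiv ℝ (fun x => Φ (x, wb)) xb) v = qb},
          sosd (cpwlFun a α d β) (Φ (xb, wb)) v 0 ∩
            {y | ContinuousLinearMap.adjoint (fderiv ℝ (fun x => Φ (x, wb)) xb) y = 0} = {0}) ↔
        (Spar (cpwlFun a α d β) (Φ (xb, wb)) : Set (Euc m)) ∩
          {y | ContinuousLinearMap.adjoint (fderiv ℝ (fun x => Φ (x, wb)) xb) y = 0} = {0})) := by
  have key : ∀ v ∈ subdiff (cpwlFun a α d β) (Φ (xb, wb)),
      sosd (cpwlFun a α d β) (Φ (xb, wb)) v 0 = Spar (cpwlFun a α d β) (Φ (xb, wb)) :=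
    fun v hv => sosd_zero_eq_Spar hl hzb hv
  refine ⟨fun v hv => by rw [key v hv], fun qb ⟨v₀, hv₀⟩ => ⟨fun h => ?_, fun h v hv => ?_⟩⟩
  · rw [← key v₀ hv₀.1]
    exact h v₀ hv₀
  · rwa [key v hv.1]

/-- For fully amenable compositions with CPWL outer function,
for each `v ∈ ∂θ(zb)` the condition `∂²θ(zb,v)(0) ∩ ker ∇ₓΦ(xb,wb)* = {0}` is equivalent
to `S(zb) ∩ ker ∇ₓΦ(xb,wb)* = {0}`; in particular the second-order qualification
condition over `M(xb,wb,qb)` holds (for any `qb` with `M(xb,wb,qb) ≠ ∅`) iff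
`S(zb) ∩ ker ∇ₓΦ(xb,wb)* = {0}`. -/
theorem soqc_iff_parallel_subspace_cond {n dd m l p : ℕ} (hl : 0 < l)
    (a : Fin l → Euc m) (α : Fin l → ℝ) (d : Fin p → Euc m) (β : Fin p → ℝ)
    (hdom : (cpwlDom d β).Nonempty)
    (Φ : Euc n × Euc dd → Euc m) (xb : Euc n) (wb : Euc dd)
    (hΦ : ContDiffAt ℝ 2 Φ (xb, wb)) (hzb : Φ (xb, wb) ∈ cpwlDom d β) :
    (∀ v ∈ subdiff (cpwlFun a α d β) (Φ (xb, wb)),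
        (sosd (cpwlFun a α d β) (Φ (xb, wb)) v 0 ∩
            {y | ContinuousLinearMap.adjoint (fderiv ℝ (fun x => Φ (x, wb)) xb) y = 0} = {0} ↔
          (Spar (cpwlFun a α d β) (Φ (xb, wb)) : Set (Euc m)) ∩
            {y | ContinuousLinearMap.adjoint (fderiv ℝ (fun x => Φ (x, wb)) xb) y = 0} = {0})) ∧
    (∀ qb : Euc n,
      {v ∈ subdiff (cpwlFun a α d β) (Φ (xb, wb)) |
          ContinuousLinearMap.adjoint (fderiv ℝ (fun x => Φ (x, wb)) xb) v = qb}.Nonempty →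
      ((∀ v ∈ {v ∈ subdiff (cpwlFun a α d β) (Φ (xb, wb)) |
          ContinuousLinearMap.adjoint (fderiv ℝ (fun x => Φ (x, wb)) xb) v = qb},
          sosd (cpwlFun a α d β) (Φ (xb, wb)) v 0 ∩
            {y | ContinuousLinearMap.adjoint (fderiv ℝ (fun x => Φ (x, wb)) xb) y = 0} = {0}) ↔
        (Spar (cpwlFun a α d β) (Φ (xb, wb)) : Set (Euc m)) ∩
          {y | ContinuousLinearMap.adjoint (fderiv ℝ (fun x => Φ (x, wb)) xb) y = 0} = {0})) :=
  soqc_iff_parallel_subspace_cond_general hl a α d β Φ xb wb hzb
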